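/- arXiv:2107.10927 — 2 statements merged into one kernel-verified Lean document; each statement's English description precedes it below -/
import Mathlib

section
/- Let L be a real symmetric n×n matrix, E the n×q indicator matrix of a partition of {1,…,n} into nonempty clusters, and L = V D Vᵀ with V orthogonal, V = [V_ρ, V_ν], where EᵀV_ρ = 0 (redundant eigenvectors) and each column of V_ν is of the form Ew for some w ∈ ℝ^q (non-redundant eigenvectors). For θ ∈ ℝⁿ let η = Vᵀθ, partitioned as η = (η_ρ, η_ν). Then θ − E(EᵀE)⁻¹Eᵀθ = V_ρ η_ρ; that is, the deviation ε_i = θ_i − θ̃_{i*} of each nodal displacement from the average displacement of its cluster is given by ε_i = Σ_{j redundant} V_{ij} η_j, a linear combination of the redundant modes only. -/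
/-!
The cluster averaging map `θ ↦ E(EᵀE)⁻¹Eᵀθ` is the orthogonal projection `P` onto the column
space of `E` (`EᵀE` is the diagonal matrix of cluster sizes, invertible since no cluster is
empty). Orthogonality of `V` splits the identity as `V_ρV_ρᵀ + V_νV_νᵀ`; `P` kills the first
summand because `EᵀV_ρ = 0` and fixes the second because `V_ν = EW`. Hence `1 - P = V_ρV_ρᵀ`,
and applying this to `θ` gives `V_ρ η_ρ`.
-/

open Matrix Finset

theorem one_sub_eq_of_mul_eq_zero_of_mul_eq_self {R : Type*} [Ring R] {P A B : R}
    (hsplit : A + B = 1) (hA : P * A = 0) (hB : P * B = B) : 1 - P = A := by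
  calc 1 - P = (A + B) - P * (A + B) := by rw [hsplit, mul_one]
    _ = A := by rw [mul_add, hA, hB]; abel

namespace Matrix

variable {R m k ι κ : Type*}

theorem exists_eq_mul_of_forall_col_eq_mulVec [CommSemiring R] [Fintype k]
    {E : Matrix m k R} {B : Matrix m κ R} (h : ∀ j, ∃ w : k → R, (fun i => B i j) = E *ᵥ w) :
    ∃ W : Matrix k κ R, B = E * W := by
  choose w hw using h
  refine ⟨of fun c j => w j c, ?_⟩
  ext i j
  simpa [mul_apply, mulVec, dotProduct] using congrFun (hw j) i

theorem mul_transpose_eq_add_toCols [Semiring R] [Fintype ι] [Fintype κ]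
    (V : Matrix m (ι ⊕ κ) R) :
    V * Vᵀ = V.toCols₁ * V.toCols₁ᵀ + V.toCols₂ * V.toCols₂ᵀ := by
  conv_lhs => rw [← fromCols_toCols V, transpose_fromCols, fromCols_mul_fromRows]

theorem one_sub_mul_nonsing_inv_transpose_mul_eq [CommRing R] [Fintype m] [DecidableEq m]
    [Fintype k] [DecidableEq k] [Fintype ι] [Fintype κ] {E : Matrix m k R}
    (hdet : IsUnit (Eᵀ * E).det) {A : Matrix m ι R} {B : Matrix m κ R} {W : Matrix k κ R}
    (hA : Eᵀ * A = 0) (hB : B = E * W) (hsplit : A * Aᵀ + B * Bᵀ = 1) :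
    1 - E * ((Eᵀ * E)⁻¹ * Eᵀ) = A * Aᵀ := by
  have hfixE : E * ((Eᵀ * E)⁻¹ * Eᵀ) * E = E := by
    rw [Matrix.mul_assoc, Matrix.mul_assoc, nonsing_inv_mul _ hdet, Matrix.mul_one]
  refine one_sub_eq_of_mul_eq_zero_of_mul_eq_self hsplit ?_ ?_
  · rw [Matrix.mul_assoc, Matrix.mul_assoc, ← Matrix.mul_assoc Eᵀ, hA, Matrix.zero_mul,
      Matrix.mul_zero, Matrix.mul_zero]
  · rw [hB, ← Matrix.mul_assoc, ← Matrix.mul_assoc, hfixE]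

section Indicator

variable [DecidableEq k]

def indicatorMatrix (R : Type*) [Zero R] [One R] (φ : m → k) : Matrix m k R :=
  of fun i c => if φ i = c then 1 else 0

variable [Fintype m] (φ : m → k)

theorem transpose_indicatorMatrix_mul_self [NonAssocSemiring R] :
    (indicatorMatrix R φ)ᵀ * indicatorMatrix R φ =
      diagonal fun c => ((univ.filter fun i => φ i = c).card : R) := by
  ext c d
  by_cases hcd : c = d
  · subst hcd
    rw [mul_apply, diagonal_apply_eq, card_filter, Nat.cast_sum]
    refine Finset.sum_congr rfl fun i _ => ?_
    by_cases hc : φ i = c <;> simp [indicatorMatrix, hc]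
  · refine (Finset.sum_eq_zero fun i _ => ?_).trans (diagonal_apply_ne _ hcd).symm
    by_cases hc : φ i = c <;> simp [indicatorMatrix, hc, hcd]

theorem isUnit_det_transpose_indicatorMatrix_mul_self [Fintype k] [Field R] [CharZero R]
    (hφ : Function.Surjective φ) :
    IsUnit ((indicatorMatrix R φ)ᵀ * indicatorMatrix R φ).det := by
  rw [transpose_indicatorMatrix_mul_self, det_diagonal]
  refine isUnit_iff_ne_zero.2 (prod_ne_zero_iff.2 fun c _ => ?_)
  obtain ⟨i, hi⟩ := hφ c
  exact Nat.cast_ne_zero.2 (card_pos.2 ⟨i, by simp [hi]⟩).ne'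

end Indicator

end Matrix

theorem deviation_is_redundant_modes_general {n q r s : ℕ}
    (φ : Fin n → Fin q) (hsurj : Function.Surjective φ)
    (E : Matrix (Fin n) (Fin q) ℝ)
    (hE : ∀ i c, E i c = if φ i = c then 1 else 0)
    (V : Matrix (Fin n) (Fin r ⊕ Fin s) ℝ)
    (horth2 : V * Vᵀ = 1)
    (hred : Eᵀ * V.submatrix id Sum.inl = 0)
    (hnonred : ∀ k : Fin s, ∃ w : Fin q → ℝ,
      (fun i => V i (Sum.inr k)) = E.mulVec w)
    (θ : Fin n → ℝ) :
    θ - E.mulVec (((Eᵀ * E)⁻¹ * Eᵀ).mulVec θ) =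
      (V.submatrix id Sum.inl).mulVec (fun k => Vᵀ.mulVec θ (Sum.inl k)) := by
  have hEφ : E = indicatorMatrix ℝ φ := by ext i c; simp [indicatorMatrix, hE]
  have hdet : IsUnit (Eᵀ * E).det := hEφ ▸ isUnit_det_transpose_indicatorMatrix_mul_self φ hsurj
  obtain ⟨W, hW⟩ := exists_eq_mul_of_forall_col_eq_mulVec (B := V.toCols₂) hnonred
  have hproj := one_sub_mul_nonsing_inv_transpose_mul_eq hdet (A := V.toCols₁) hred hW
    (by rw [← mul_transpose_eq_add_toCols, horth2])
  calc θ - E *ᵥ (((Eᵀ * E)⁻¹ * Eᵀ) *ᵥ θ) = (1 - E * ((Eᵀ * E)⁻¹ * Eᵀ)) *ᵥ θ := by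
        rw [sub_mulVec, one_mulVec, mulVec_mulVec]
    _ = V.toCols₁ *ᵥ (V.toCols₁ᵀ *ᵥ θ) := by rw [hproj, mulVec_mulVec]

/-- The deviation of the nodal displacements from their cluster averages,
`θ - E(EᵀE)⁻¹Eᵀθ`, is a linear combination of the redundant modes only:
it equals `V_ρ η_ρ` where `η = Vᵀθ`. -/
theorem deviation_is_redundant_modes {n q r s : ℕ}
    (L : Matrix (Fin n) (Fin n) ℝ)
    (φ : Fin n → Fin q) (hsurj : Function.Surjective φ)
    (E : Matrix (Fin n) (Fin q) ℝ)
    (hE : ∀ i c, E i c = if φ i = c then 1 else 0)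
    (V : Matrix (Fin n) (Fin r ⊕ Fin s) ℝ)
    (Dρ : Fin r → ℝ) (Dν : Fin s → ℝ)
    (horth1 : Vᵀ * V = 1) (horth2 : V * Vᵀ = 1)
    (hdecomp : L = V * Matrix.diagonal (Sum.elim Dρ Dν) * Vᵀ)
    (hred : Eᵀ * V.submatrix id Sum.inl = 0)
    (hnonred : ∀ k : Fin s, ∃ w : Fin q → ℝ,
      (fun i => V i (Sum.inr k)) = E.mulVec w)
    (θ : Fin n → ℝ) :
    θ - E.mulVec (((Eᵀ * E)⁻¹ * Eᵀ).mulVec θ) =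
      (V.submatrix id Sum.inl).mulVec (fun k => Vᵀ.mulVec θ (Sum.inl k)) :=
  deviation_is_redundant_modes_general φ hsurj E hE V horth2 hred hnonred θ
end

section
/- Let G be a finite group of permutations of {1,…,n} and L a real n×n matrix with L_{σ(i)σ(j)} = L_{ij} for all σ ∈ G; let S_1,…,S_q be the orbits of G, E the indicator matrix, L̃ = (EᵀE)⁻¹EᵀLE, γ > 0 and p ∈ ℝⁿ with p̃ = (EᵀE)⁻¹Eᵀp. If θ : ℝ → ℝⁿ is a solution of the linear swing equation θ̈(t) = −γ θ̇(t) + L θ(t) + p, then the vector of cluster averages θ̃(t) = (EᵀE)⁻¹Eᵀθ(t) solves the quotient-network equation θ̃̈(t) = −γ θ̃̇(t) + L̃ θ̃(t) + p̃. -/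
/-!
The symmetries of `L` preserve the clusters, so the sum over a cluster `c` of a column
`L · j` depends only on the cluster of `j`. This says `Eᵀ L = K Eᵀ` for some `K`, i.e. `L`
maps vectors with zero cluster sums to vectors with zero cluster sums. As `θ - E θ̃` has zero
cluster sums, averaging `Lθ` gives the same as averaging `L E θ̃`, which is `L̃ θ̃`. Averaging
is linear and constant in time, so it commutes with differentiation.
-/

open Matrix Finset

theorem hasDerivAt_mulVec_apply {𝕜 m n : Type*} [NontriviallyNormedField 𝕜] [Fintype n]
    (A : Matrix m n 𝕜) {f : 𝕜 → n → 𝕜} {f' : n → 𝕜} {t : 𝕜}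
    (hf : ∀ j, HasDerivAt (fun s => f s j) (f' j) t) (c : m) :
    HasDerivAt (fun s => (A *ᵥ f s) c) ((A *ᵥ f') c) t := by
  simpa [mulVec, dotProduct] using HasDerivAt.fun_sum fun j _ => (hf j).const_mul (A c j)

section LeftInverse

variable {R m n : Type*} [CommRing R] [Fintype m] [Fintype n] [DecidableEq n]

theorem inv_mul_transpose_mul_mul_mul_inv_mul_transpose {E : Matrix m n R}
    (hE : IsUnit (Eᵀ * E).det) {L : Matrix m m R} {K : Matrix n n R}
    (hEL : Eᵀ * L = K * Eᵀ) :
    (Eᵀ * E)⁻¹ * Eᵀ * L * E * ((Eᵀ * E)⁻¹ * Eᵀ) = (Eᵀ * E)⁻¹ * Eᵀ * L := by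
  calc (Eᵀ * E)⁻¹ * Eᵀ * L * E * ((Eᵀ * E)⁻¹ * Eᵀ)
      = (Eᵀ * E)⁻¹ * K * (Eᵀ * E * (Eᵀ * E)⁻¹) * Eᵀ := by
        simp only [Matrix.mul_assoc, hEL]
    _ = (Eᵀ * E)⁻¹ * Eᵀ * L := by
        rw [mul_nonsing_inv _ hE, Matrix.mul_one, Matrix.mul_assoc _ Eᵀ, hEL, Matrix.mul_assoc]

end LeftInverse

section ClusterMatrix

variable {ι κ : Type*} [DecidableEq κ]

def clusterMatrix (R : Type*) [Zero R] [One R] (φ : ι → κ) : Matrix ι κ R :=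
  of fun i c => if φ i = c then 1 else 0

variable {R : Type*} [CommRing R] {φ : ι → κ}

theorem mul_clusterMatrix_transpose_apply [Fintype κ] (K : Matrix κ κ R) (c : κ) (j : ι) :
    (K * (clusterMatrix R φ)ᵀ) c j = K c (φ j) := by
  simp [clusterMatrix, mul_apply]

variable [Fintype ι]

theorem clusterMatrix_transpose_mul_apply {α : Type*} (A : Matrix ι α R) (c : κ) (j : α) :
    ((clusterMatrix R φ)ᵀ * A) c j = ∑ i with φ i = c, A i j := by
  simp [clusterMatrix, mul_apply, sum_filter]

theorem clusterMatrix_transpose_mul_self :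
    (clusterMatrix R φ)ᵀ * clusterMatrix R φ = diagonal fun c => (#{i | φ i = c} : R) := by
  ext c d
  rw [clusterMatrix_transpose_mul_apply, diagonal_apply]
  split_ifs with hcd
  · simp [clusterMatrix, hcd, filter_filter]
  · exact sum_eq_zero fun i hi => by simp [clusterMatrix, (mem_filter.1 hi).2, hcd]

theorem isUnit_det_clusterMatrix_transpose_mul_self {𝕜 : Type*} [Field 𝕜] [CharZero 𝕜]
    [Fintype κ] (hφ : Function.Surjective φ) :
    IsUnit ((clusterMatrix 𝕜 φ)ᵀ * clusterMatrix 𝕜 φ).det := by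
  rw [clusterMatrix_transpose_mul_self, det_diagonal, isUnit_iff_ne_zero]
  exact prod_ne_zero_iff.2 fun c _ => Nat.cast_ne_zero.2 <|
    card_ne_zero_of_mem (mem_filter.2 ⟨mem_univ _, Function.surjInv_eq hφ c⟩)

theorem exists_clusterMatrix_transpose_mul_eq [Fintype κ] (hφ : Function.Surjective φ)
    (L : Matrix ι ι R)
    (hL : ∀ c j j', φ j = φ j' → ∑ i with φ i = c, L i j = ∑ i with φ i = c, L i j') :
    ∃ K : Matrix κ κ R, (clusterMatrix R φ)ᵀ * L = K * (clusterMatrix R φ)ᵀ := by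
  refine ⟨of fun c d => ∑ i with φ i = c, L i (Function.surjInv hφ d), ?_⟩
  ext c j
  rw [clusterMatrix_transpose_mul_apply, mul_clusterMatrix_transpose_apply, of_apply,
    hL c _ _ (Function.surjInv_eq hφ _).symm]

end ClusterMatrix

section Symmetry

variable {ι κ R : Type*} [Fintype ι] [DecidableEq κ] [AddCommMonoid R] {φ : ι → κ}
  {L : Matrix ι ι R}

theorem sum_fiber_apply_perm {σ : Equiv.Perm ι} (hφ : ∀ i, φ (σ i) = φ i)
    (hL : ∀ i j, L (σ i) (σ j) = L i j) (c : κ) (j : ι) :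
    ∑ i with φ i = c, L i (σ j) = ∑ i with φ i = c, L i j := by
  simp only [sum_filter]
  rw [← Equiv.sum_comp σ]
  simp only [hφ, hL]

theorem sum_fiber_apply_eq_of_fiber_eq {G : Subgroup (Equiv.Perm ι)}
    (hL : ∀ σ ∈ G, ∀ i j, L (σ i) (σ j) = L i j)
    (horb : ∀ i j, φ i = φ j ↔ ∃ σ ∈ G, σ i = j) (c : κ) {j j' : ι} (hj : φ j = φ j') :
    ∑ i with φ i = c, L i j = ∑ i with φ i = c, L i j' := by
  obtain ⟨σ, hσ, rfl⟩ := (horb j j').1 hj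
  exact (sum_fiber_apply_perm (fun i => ((horb i (σ i)).2 ⟨σ, hσ, rfl⟩).symm) (hL σ hσ) c j).symm

end Symmetry

theorem cluster_averages_solve_quotient_general {n q : ℕ}
    (G : Subgroup (Equiv.Perm (Fin n)))
    (L : Matrix (Fin n) (Fin n) ℝ)
    (hL : ∀ σ ∈ G, ∀ i j, L (σ i) (σ j) = L i j)
    (φ : Fin n → Fin q) (hsurj : Function.Surjective φ)
    (horb : ∀ i j, φ i = φ j ↔ ∃ σ ∈ G, σ i = j)
    (E : Matrix (Fin n) (Fin q) ℝ)
    (hE : ∀ i c, E i c = if φ i = c then 1 else 0)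
    (γ : ℝ) (p : Fin n → ℝ)
    (θ θ' θ'' : ℝ → Fin n → ℝ)
    (hθ1 : ∀ i t, HasDerivAt (fun s => θ s i) (θ' t i) t)
    (hθ2 : ∀ i t, HasDerivAt (fun s => θ' s i) (θ'' t i) t)
    (hode : ∀ t, θ'' t = -γ • θ' t + L.mulVec (θ t) + p) :
    (∀ (c : Fin q) (t : ℝ), HasDerivAt
      (fun s => ((Eᵀ * E)⁻¹ * Eᵀ).mulVec (θ s) c)
      (((Eᵀ * E)⁻¹ * Eᵀ).mulVec (θ' t) c) t) ∧
    (∀ (c : Fin q) (t : ℝ), HasDerivAt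
      (fun s => ((Eᵀ * E)⁻¹ * Eᵀ).mulVec (θ' s) c)
      (((Eᵀ * E)⁻¹ * Eᵀ).mulVec (θ'' t) c) t) ∧
    (∀ t : ℝ, ((Eᵀ * E)⁻¹ * Eᵀ).mulVec (θ'' t) =
      -γ • ((Eᵀ * E)⁻¹ * Eᵀ).mulVec (θ' t) +
        ((Eᵀ * E)⁻¹ * Eᵀ * L * E).mulVec (((Eᵀ * E)⁻¹ * Eᵀ).mulVec (θ t)) +
        ((Eᵀ * E)⁻¹ * Eᵀ).mulVec p) := by
  obtain rfl : E = clusterMatrix ℝ φ := Matrix.ext hE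
  obtain ⟨K, hK⟩ := exists_clusterMatrix_transpose_mul_eq hsurj L
    fun c _ _ => sum_fiber_apply_eq_of_fiber_eq hL horb c
  have hquot := inv_mul_transpose_mul_mul_mul_inv_mul_transpose
    (isUnit_det_clusterMatrix_transpose_mul_self hsurj) hK
  refine ⟨fun c t => hasDerivAt_mulVec_apply _ (hθ1 · t) c,
    fun c t => hasDerivAt_mulVec_apply _ (hθ2 · t) c, fun t => ?_⟩
  rw [hode t, mulVec_mulVec, hquot]
  simp only [mulVec_add, mulVec_smul, mulVec_mulVec]

/-- If `G` is a group of permutation symmetries of `L`, and `θ` solves the linear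
swing equation `θ̈ = -γθ̇ + Lθ + p`, then the vector of cluster averages
`θ̃ = (EᵀE)⁻¹Eᵀθ` solves the quotient-network equation
`θ̃̈ = -γθ̃̇ + L̃θ̃ + p̃`, with `L̃ = (EᵀE)⁻¹EᵀLE` and `p̃ = (EᵀE)⁻¹Eᵀp`. -/
theorem cluster_averages_solve_quotient {n q : ℕ}
    (G : Subgroup (Equiv.Perm (Fin n)))
    (L : Matrix (Fin n) (Fin n) ℝ)
    (hL : ∀ σ ∈ G, ∀ i j, L (σ i) (σ j) = L i j)
    (φ : Fin n → Fin q) (hsurj : Function.Surjective φ)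
    (horb : ∀ i j, φ i = φ j ↔ ∃ σ ∈ G, σ i = j)
    (E : Matrix (Fin n) (Fin q) ℝ)
    (hE : ∀ i c, E i c = if φ i = c then 1 else 0)
    (γ : ℝ) (hγ : 0 < γ) (p : Fin n → ℝ)
    (θ θ' θ'' : ℝ → Fin n → ℝ)
    (hθ1 : ∀ i t, HasDerivAt (fun s => θ s i) (θ' t i) t)
    (hθ2 : ∀ i t, HasDerivAt (fun s => θ' s i) (θ'' t i) t)
    (hode : ∀ t, θ'' t = -γ • θ' t + L.mulVec (θ t) + p) :
    (∀ (c : Fin q) (t : ℝ), HasDerivAt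
      (fun s => ((Eᵀ * E)⁻¹ * Eᵀ).mulVec (θ s) c)
      (((Eᵀ * E)⁻¹ * Eᵀ).mulVec (θ' t) c) t) ∧
    (∀ (c : Fin q) (t : ℝ), HasDerivAt
      (fun s => ((Eᵀ * E)⁻¹ * Eᵀ).mulVec (θ' s) c)
      (((Eᵀ * E)⁻¹ * Eᵀ).mulVec (θ'' t) c) t) ∧
    (∀ t : ℝ, ((Eᵀ * E)⁻¹ * Eᵀ).mulVec (θ'' t) =
      -γ • ((Eᵀ * E)⁻¹ * Eᵀ).mulVec (θ' t) +
        ((Eᵀ * E)⁻¹ * Eᵀ * L * E).mulVec (((Eᵀ * E)⁻¹ * Eᵀ).mulVec (θ t)) +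
        ((Eᵀ * E)⁻¹ * Eᵀ).mulVec p) :=
  cluster_averages_solve_quotient_general G L hL φ hsurj horb E hE γ p θ θ' θ'' hθ1 hθ2 hode
end
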